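/- arXiv:2011.02721 — 3 statements merged into one kernel-verified Lean document; each statement's English description precedes it below -/
import Mathlib

section
/- Let f : ℝ → ℝ be continuous, I ⊆ ℝ compact and nonempty, g : I → ℝ^{n+1} and h : I → ℝ^{m+1} continuous, and let C = {(a,b) ∈ ℝ^{n+1} × ℝ^{m+1} : ⟨b, h(t)⟩ ≥ 1 for all t ∈ I}. Then the maximal deviation Ψ(a,b) = sup_{t∈I} |f(t) − ⟨a, g(t)⟩/⟨b, h(t)⟩| is a quasi-convex function on C. -/
open RealInnerProductSpace

/-- The maximal deviation of a generalised rational approximation is quasi-convex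
on the feasible set. -/
theorem maximal_deviation_quasiconvex
    (n m : ℕ) (f : ℝ → ℝ) (hf : Continuous f)
    (I : Set ℝ) (hI : IsCompact I) (hIne : I.Nonempty)
    (g : ℝ → EuclideanSpace ℝ (Fin (n + 1))) (hg : ContinuousOn g I)
    (h : ℝ → EuclideanSpace ℝ (Fin (m + 1))) (hh : ContinuousOn h I) :
    QuasiconvexOn ℝ
      {p : EuclideanSpace ℝ (Fin (n + 1)) × EuclideanSpace ℝ (Fin (m + 1)) |
        ∀ t ∈ I, 1 ≤ ⟪p.2, h t⟫}
      (fun p => ⨆ t : I, |f t - ⟪p.1, g t⟫ / ⟪p.2, h t⟫|) := by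
  haveI : Nonempty I := hIne.to_subtype
  have bdd : ∀ r : EuclideanSpace ℝ (Fin (n + 1)) × EuclideanSpace ℝ (Fin (m + 1)),
      (∀ t ∈ I, (1:ℝ) ≤ ⟪r.2, h t⟫) →
      BddAbove (Set.range fun t : I => |f t - ⟪r.1, g t⟫ / ⟪r.2, h t⟫|) := by
    intro r hr
    have hcont : ContinuousOn (fun t => |f t - ⟪r.1, g t⟫ / ⟪r.2, h t⟫|) I :=
      (hf.continuousOn.sub ((continuousOn_const.inner hg).div
        (continuousOn_const.inner hh)
        (fun t ht => ne_of_gt (lt_of_lt_of_le one_pos (hr t ht))))).abs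
    have := hI.bddAbove_image hcont
    rwa [show ((fun t => |f t - ⟪r.1, g t⟫ / ⟪r.2, h t⟫|) '' I)
        = Set.range fun t : I => |f t - ⟪r.1, g t⟫ / ⟪r.2, h t⟫| from
      (Set.range_restrict _ I).symm] at this
  intro c
  rintro p ⟨hpC, hpc⟩ q ⟨hqC, hqc⟩ a b ha hb hab
  have hbddp := bdd p hpC
  have hbddq := bdd q hqC
  constructor
  · -- membership in C
    intro t ht
    have h1 := hpC t ht
    have h2 := hqC t ht
    simp only [Prod.snd_add, Prod.smul_snd, inner_add_left, real_inner_smul_left]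
    nlinarith
  · -- sup bound
    refine ciSup_le fun t => ?_
    have ht : (t : ℝ) ∈ I := t.2
    set A1 := ⟪p.1, g t⟫ with hA1
    set B1 := ⟪p.2, h t⟫ with hB1
    set A2 := ⟪q.1, g t⟫ with hA2
    set B2 := ⟪q.2, h t⟫ with hB2
    have hB1' : (1:ℝ) ≤ B1 := hpC t ht
    have hB2' : (1:ℝ) ≤ B2 := hqC t ht
    have he1 : |f t - A1 / B1| ≤ c :=
      le_trans (le_ciSup hbddp t) hpc
    have he2 : |f t - A2 / B2| ≤ c :=
      le_trans (le_ciSup hbddq t) hqc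
    have hnum : ⟪(a • p + b • q).1, g t⟫ = a * A1 + b * A2 := by
      simp [Prod.fst_add, Prod.smul_fst, inner_add_left, real_inner_smul_left, Finset.mul_sum, mul_assoc, hA1, hA2]
    have hden : ⟪(a • p + b • q).2, h t⟫ = a * B1 + b * B2 := by
      simp [Prod.snd_add, Prod.smul_snd, inner_add_left, real_inner_smul_left, Finset.mul_sum, mul_assoc, hB1, hB2]
    rw [hnum, hden]
    have hD : (0:ℝ) < a * B1 + b * B2 := by nlinarith
    have hB1pos : (0:ℝ) < B1 := lt_of_lt_of_le one_pos hB1'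
    have hB2pos : (0:ℝ) < B2 := lt_of_lt_of_le one_pos hB2'
    have key : f t - (a * A1 + b * A2) / (a * B1 + b * B2)
        = (a * B1 * (f t - A1 / B1) + b * B2 * (f t - A2 / B2)) / (a * B1 + b * B2) := by
      field_simp
      ring
    rw [key, abs_div, abs_of_pos hD, div_le_iff₀ hD]
    calc |a * B1 * (f t - A1 / B1) + b * B2 * (f t - A2 / B2)|
        ≤ |a * B1 * (f t - A1 / B1)| + |b * B2 * (f t - A2 / B2)| := abs_add_le _ _
      _ = a * B1 * |f t - A1 / B1| + b * B2 * |f t - A2 / B2| := by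
          simp [abs_mul, abs_of_nonneg ha, abs_of_nonneg hb, abs_of_pos hB1pos, abs_of_pos hB2pos, mul_assoc]
      _ ≤ a * B1 * c + b * B2 * c := by
          gcongr <;> positivity
      _ = c * (a * B1 + b * B2) := by ring
end

section
/- (Directional inequality for strict improvement.) Let f, g, h, I, C, Ψ, σ_t be as above with Ψ(a,b) > 0, and set s_t(a,b) = σ_t(a,b)/Ψ(a,b) for t active (so s_t = ±1). Suppose (a−a′, b−b′) ∈ C satisfies |σ_t(a−a′, b−b′)| < |σ_t(a,b)| for some active point t ∈ A⁺(a,b) ∪ A⁻(a,b). Then ⟨(a′,b′), s_t(a,b)·∇σ_t(a,b)⟩ > 0. -/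
open RealInnerProductSpace

/-- Directional inequality for strict improvement at an active point: if moving in the
direction (a',b') strictly decreases the deviation at an active point t, then the inner
product of (a',b') with s_t·∇σ_t is positive. -/
theorem directional_inequality_strict_improvement
    (n m : ℕ) (c : ℝ)
    (gt : EuclideanSpace ℝ (Fin (n + 1))) (ht : EuclideanSpace ℝ (Fin (m + 1)))
    (a a' : EuclideanSpace ℝ (Fin (n + 1))) (b b' : EuclideanSpace ℝ (Fin (m + 1)))
    (hb : 1 ≤ ⟪b, ht⟫) (hb' : 1 ≤ ⟪b - b', ht⟫)
    (Ψ : ℝ) (hΨpos : 0 < Ψ)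
    (hactive : |c - ⟪a, gt⟫ / ⟪b, ht⟫| = Ψ)
    (himprove : |c - ⟪a - a', gt⟫ / ⟪b - b', ht⟫| < |c - ⟪a, gt⟫ / ⟪b, ht⟫|)
    (s : ℝ) (hs : s = (c - ⟪a, gt⟫ / ⟪b, ht⟫) / Ψ) :
    0 < ⟪a', s • ((⟪b, ht⟫ ^ 2)⁻¹ • (-⟪b, ht⟫ • gt))⟫ +
        ⟪b', s • ((⟪b, ht⟫ ^ 2)⁻¹ • (⟪a, gt⟫ • ht))⟫ := by
  have hD : (0:ℝ) < ⟪b, ht⟫ := lt_of_lt_of_le one_pos hb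
  have hE : (0:ℝ) < ⟪b - b', ht⟫ := lt_of_lt_of_le one_pos hb'
  rw [inner_sub_left] at hE
  rw [inner_sub_left, inner_sub_left] at himprove
  simp only [real_inner_smul_right, inner_neg_right]
  set D := ⟪b, ht⟫ with hDdef
  set G := ⟪a, gt⟫ with hGdef
  set G' := ⟪a', gt⟫ with hG'def
  set D' := ⟪b', ht⟫ with hD'def
  set σ := c - G / D with hσ
  set σ' := c - (G - G') / (D - D') with hσ'
  have habs : |σ| = Ψ := hactive
  have hlt : |σ'| < |σ| := himprove
  have hsσ : s * σ = Ψ := by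
    have hsq : σ ^ 2 = Ψ ^ 2 := by rw [← habs, sq_abs]
    rw [hs]
    field_simp
    nlinarith
  have hsabs : |s| = 1 := by
    rw [hs, abs_div, habs, abs_of_pos hΨpos, div_self hΨpos.ne']
  have hsσ' : s * σ' < Ψ := by
    calc s * σ' ≤ |s * σ'| := le_abs_self _
    _ = |σ'| := by rw [abs_mul, hsabs, one_mul]
    _ < Ψ := habs ▸ hlt
  have key : 0 < s * (σ - σ') := by nlinarith
  have hdiff : σ - σ' = (G * D' - G' * D) / (D * (D - D')) := by
    rw [hσ, hσ']
    field_simp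
    ring
  have hnum : 0 < s * (G * D' - G' * D) := by
    have h1 : 0 < s * (σ - σ') * (D * (D - D')) := mul_pos key (mul_pos hD hE)
    calc 0 < s * (σ - σ') * (D * (D - D')) := h1
    _ = s * (G * D' - G' * D) := by
        rw [hdiff]; field_simp
  have hgoal : s * ((D ^ 2)⁻¹ * (-D * G')) + s * ((D ^ 2)⁻¹ * (G * D'))
      = s * (G * D' - G' * D) / D ^ 2 := by ring
  rw [hgoal]
  exact div_pos hnum (by positivity)
end

section
/- (Global optimality from the subdifferential.) Let f, g, h, I, C, Ψ be as above and suppose the zero vector belongs to conv{s_t(a,b)·∇σ_t(a,b) : t ∈ A⁺(a,b) ∪ A⁻(a,b)}, where s_t(a,b) = 1 for t ∈ A⁺(a,b) and s_t(a,b) = −1 for t ∈ A⁻(a,b). Then (a,b) is a global minimizer of Ψ over C. -/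
open RealInnerProductSpace

/-! If some feasible `q` had `Ψ q < Ψ (a, b)`, pair each signed gradient with the direction
`q - (a, b)`. Since `σ_t` is linear-fractional, the pairing with `∇σ_t(a, b)` is the positive
multiple `⟪q.2, h t⟫ / ⟪b, h t⟫` of the increment `σ_t(q) - σ_t(a, b)`, and at an active `t`
the sign `s_t` turns that increment into `s_t σ_t(q) - Ψ(a, b) ≤ Ψ q - Ψ(a, b) < 0`. So all
signed gradients lie in an open half-space avoiding `0`, and so does their convex hull. -/

theorem zero_notMem_convexHull_of_forall_neg {𝕜 E : Type*} [Field 𝕜] [LinearOrder 𝕜]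
    [IsStrictOrderedRing 𝕜] [AddCommGroup E] [Module 𝕜 E] {s : Set E} (ℓ : E →ₗ[𝕜] 𝕜)
    (hs : ∀ v ∈ s, ℓ v < 0) : (0 : E) ∉ convexHull 𝕜 s := by
  intro h0
  have : ℓ 0 < 0 := convexHull_min hs (convex_halfSpace_lt ℓ.isLinear 0) h0
  exact this.ne (map_zero ℓ)

theorem IsCompact.le_ciSup_of_continuousOn {α β : Type*} [TopologicalSpace α]
    [ConditionallyCompleteLinearOrder β] [TopologicalSpace β] [ClosedIciTopology β]
    {F : α → β} {I : Set α} (hI : IsCompact I) (hF : ContinuousOn F I) {t : α} (ht : t ∈ I) :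
    F t ≤ ⨆ s : I, F s :=
  haveI : Nonempty β := ⟨F t⟩
  le_ciSup (Set.image_eq_range F I ▸ hI.bddAbove_image hF) ⟨t, ht⟩

theorem mul_sub_neg_of_abs_lt {s x y M : ℝ} (hs : s = 1 ∨ s = -1) (hy : s * y = M)
    (hx : |x| < M) : s * (x - y) < 0 := by
  rcases hs with rfl | rfl <;> linarith [le_abs_self x, neg_abs_le x]

section

variable {E F : Type*} [NormedAddCommGroup E] [InnerProductSpace ℝ E]
  [NormedAddCommGroup F] [InnerProductSpace ℝ F]

theorem coprod_innerₗ_quotient_grad (a a' g : E) (b b' h : F) (hb : ⟪b, h⟫ ≠ 0)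
    (hb' : ⟪b', h⟫ ≠ 0) :
    (innerₗ E (a' - a)).coprod (innerₗ F (b' - b)) ((⟪b, h⟫ ^ 2)⁻¹ • (-⟪b, h⟫ • g, ⟪a, g⟫ • h))
      = ⟪b', h⟫ / ⟪b, h⟫ * (⟪a, g⟫ / ⟪b, h⟫ - ⟪a', g⟫ / ⟪b', h⟫) := by
  simp only [map_smul, LinearMap.coprod_apply, innerₗ_apply_apply, inner_sub_left, smul_eq_mul]
  field_simp
  ring

end

theorem global_optimality_from_subdifferential_general
    (n m : ℕ) (f : ℝ → ℝ) (hf : Continuous f)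
    (I : Set ℝ) (hI : IsCompact I)
    (g : ℝ → EuclideanSpace ℝ (Fin (n + 1))) (hg : ContinuousOn g I)
    (h : ℝ → EuclideanSpace ℝ (Fin (m + 1))) (hh : ContinuousOn h I)
    (C : Set (EuclideanSpace ℝ (Fin (n + 1)) × EuclideanSpace ℝ (Fin (m + 1))))
    (hC : C = {p | ∀ t ∈ I, 1 ≤ ⟪p.2, h t⟫})
    (Ψ : (EuclideanSpace ℝ (Fin (n + 1)) × EuclideanSpace ℝ (Fin (m + 1))) → ℝ)
    (hΨ : ∀ p, Ψ p = ⨆ t : I, |f t - ⟪p.1, g t⟫ / ⟪p.2, h t⟫|)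
    (a : EuclideanSpace ℝ (Fin (n + 1))) (b : EuclideanSpace ℝ (Fin (m + 1)))
    (hab : (a, b) ∈ C)
    (σ : ℝ → ℝ) (hσ : ∀ t, σ t = f t - ⟪a, g t⟫ / ⟪b, h t⟫)
    (Aplus Aminus : Set ℝ)
    (hAplus : Aplus = {t ∈ I | σ t = Ψ (a, b)})
    (hAminus : Aminus = {t ∈ I | -σ t = Ψ (a, b)})
    (st : ℝ → ℝ)
    (hst : (∀ t ∈ Aplus, st t = 1) ∧ ∀ t ∈ Aminus, st t = -1)
    (grad : ℝ → EuclideanSpace ℝ (Fin (n + 1)) × EuclideanSpace ℝ (Fin (m + 1)))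
    (hgrad : ∀ t, grad t =
      (⟪b, h t⟫ ^ 2)⁻¹ • (-⟪b, h t⟫ • g t, ⟪a, g t⟫ • h t))
    (hzero : (0 : EuclideanSpace ℝ (Fin (n + 1)) × EuclideanSpace ℝ (Fin (m + 1))) ∈
      convexHull ℝ ((fun t => st t • grad t) '' (Aplus ∪ Aminus))) :
    ∀ q ∈ C, Ψ (a, b) ≤ Ψ q := by
  subst hC hAplus hAminus
  intro q hq
  by_contra! hlt
  refine zero_notMem_convexHull_of_forall_neg
    ((innerₗ _ (q.1 - a)).coprod (innerₗ _ (q.2 - b))) ?_ hzero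
  rintro _ ⟨t, ht, rfl⟩
  have htI : t ∈ I := ht.elim (·.1) (·.1)
  have hb : 0 < ⟪b, h t⟫ := one_pos.trans_le (hab t htI)
  have hq_pos : ∀ s ∈ I, 0 < ⟪q.2, h s⟫ := fun s hs => one_pos.trans_le (hq s hs)
  have hsign : st t = 1 ∨ st t = -1 := ht.imp (hst.1 t) (hst.2 t)
  have hactive : st t * σ t = Ψ (a, b) := by
    rcases ht with ht | ht
    · rw [hst.1 t ht, one_mul, ht.2]
    · rw [hst.2 t ht, neg_one_mul, ht.2]
  have hq_le : |f t - ⟪q.1, g t⟫ / ⟪q.2, h t⟫| ≤ Ψ q := hΨ q ▸ hI.le_ciSup_of_continuousOn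
    (hf.continuousOn.sub ((continuousOn_const.inner hg).div (continuousOn_const.inner hh)
      fun s hs => (hq_pos s hs).ne')).abs htI
  have hdecrease := mul_sub_neg_of_abs_lt hsign hactive (hq_le.trans_lt hlt)
  rw [hσ, sub_sub_sub_cancel_left] at hdecrease
  rw [map_smul, hgrad, coprod_innerₗ_quotient_grad _ _ _ _ _ _ hb.ne' (hq_pos t htI).ne',
    smul_eq_mul, mul_left_comm]
  exact mul_neg_of_pos_of_neg (div_pos (hq_pos t htI) hb) hdecrease

/-- Global optimality from the subdifferential: if the zero vector belongs to the convex
hull of the (signed) gradients at the active points, then (a,b) is a global minimiser of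
the maximal deviation over the feasible set. -/
theorem global_optimality_from_subdifferential
    (n m : ℕ) (f : ℝ → ℝ) (hf : Continuous f)
    (I : Set ℝ) (hI : IsCompact I) (hIne : I.Nonempty)
    (g : ℝ → EuclideanSpace ℝ (Fin (n + 1))) (hg : ContinuousOn g I)
    (h : ℝ → EuclideanSpace ℝ (Fin (m + 1))) (hh : ContinuousOn h I)
    (C : Set (EuclideanSpace ℝ (Fin (n + 1)) × EuclideanSpace ℝ (Fin (m + 1))))
    (hC : C = {p | ∀ t ∈ I, 1 ≤ ⟪p.2, h t⟫})
    (Ψ : (EuclideanSpace ℝ (Fin (n + 1)) × EuclideanSpace ℝ (Fin (m + 1))) → ℝ)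
    (hΨ : ∀ p, Ψ p = ⨆ t : I, |f t - ⟪p.1, g t⟫ / ⟪p.2, h t⟫|)
    (a : EuclideanSpace ℝ (Fin (n + 1))) (b : EuclideanSpace ℝ (Fin (m + 1)))
    (hab : (a, b) ∈ C)
    (σ : ℝ → ℝ) (hσ : ∀ t, σ t = f t - ⟪a, g t⟫ / ⟪b, h t⟫)
    (Aplus Aminus : Set ℝ)
    (hAplus : Aplus = {t ∈ I | σ t = Ψ (a, b)})
    (hAminus : Aminus = {t ∈ I | -σ t = Ψ (a, b)})
    (st : ℝ → ℝ)
    (hst : (∀ t ∈ Aplus, st t = 1) ∧ ∀ t ∈ Aminus, st t = -1)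
    (grad : ℝ → EuclideanSpace ℝ (Fin (n + 1)) × EuclideanSpace ℝ (Fin (m + 1)))
    (hgrad : ∀ t, grad t =
      (⟪b, h t⟫ ^ 2)⁻¹ • (-⟪b, h t⟫ • g t, ⟪a, g t⟫ • h t))
    (hzero : (0 : EuclideanSpace ℝ (Fin (n + 1)) × EuclideanSpace ℝ (Fin (m + 1))) ∈
      convexHull ℝ ((fun t => st t • grad t) '' (Aplus ∪ Aminus))) :
    ∀ q ∈ C, Ψ (a, b) ≤ Ψ q :=
  global_optimality_from_subdifferential_general n m f hf I hI g hg h hh C hC Ψ hΨ a b hab σ hσ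
    Aplus Aminus hAplus hAminus st hst grad hgrad hzero
end
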